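/- If φ is a fuzzy simulation between fuzzy automata A and A', then for every formula w in the simulation logic F_s: φ⁻¹ ∘ w^A ≤ w^{A'} (pointwise). In particular φ(x,x') ≤ ⋀_{w∈F_s}(w^A(x) → w^{A'}(x')). -/

import Mathlib

/-! Induction on the formula. Multiplication by a fixed element is a left adjoint, so it
preserves suprema and sup-⊗ composition is associative; in the case `s ∘ w` this lets the
simulation inequality `φ⁻¹ ∘ δ_s ≤ δ'_s ∘ φ⁻¹` push `φ⁻¹` past `δ_s`. The pointwise bound on
`φ` is the first claim read through adjointness. -/

/-- A complete residuated lattice: a complete lattice with a commutative monoid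
structure whose unit is the top element, together with a residuum `himp`
satisfying the adjointness property. -/
class CompleteResiduatedLattice (L : Type*) extends CompleteLattice L, CommMonoid L where
  himp : L → L → L
  adjoint : ∀ a b c : L, a * b ≤ c ↔ a ≤ himp b c
  one_eq_top : (1 : L) = ⊤

open CompleteResiduatedLattice

variable {L : Type*} [CompleteResiduatedLattice L]

/-- Sup-⊗ composition of fuzzy relations. -/
def relComp {X Y Z : Type*} (φ : X → Y → L) (ψ : Y → Z → L) : X → Z → L :=
  fun x z => ⨆ y, φ x y * ψ y z

/-- Composition of a fuzzy relation with a fuzzy set. -/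
def relSet {X Y : Type*} (φ : X → Y → L) (g : Y → L) : X → L :=
  fun x => ⨆ y, φ x y * g y

/-- Composition of a fuzzy set with a fuzzy relation. -/
def setRel {X Y : Type*} (f : X → L) (φ : X → Y → L) : Y → L :=
  fun y => ⨆ x, f x * φ x y

/-- The converse of a fuzzy relation. -/
def conv {X Y : Type*} (φ : X → Y → L) : Y → X → L := fun y x => φ x y

/-- The fuzzy degree of inclusion of fuzzy sets. -/
def fuzS {X : Type*} (f g : X → L) : L := ⨅ x, himp (f x) (g x)

/-- The fuzzy degree of equality of fuzzy sets. -/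
def fuzE {X : Type*} (f g : X → L) : L := ⨅ x, himp (f x) (g x) ⊓ himp (g x) (f x)

/-- A fuzzy automaton over the alphabet `Sig` with state set `A`. -/
structure FuzzyAutomaton (L : Type*) (Sig : Type*) (A : Type*) where
  δ : A → Sig → A → L
  σ : A → L
  τ : A → L

variable {Sig : Type*}

/-- A fuzzy simulation between two fuzzy automata. -/
def IsFuzzySimulation {A A' : Type*} (M : FuzzyAutomaton L Sig A)
    (M' : FuzzyAutomaton L Sig A') (φ : A → A' → L) : Prop :=
  (∀ s, relComp (conv φ) (fun x y => M.δ x s y) ≤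
        relComp (fun x' y' => M'.δ x' s y') (conv φ)) ∧
  relSet (conv φ) M.τ ≤ M'.τ

/-- The norm of a fuzzy simulation: `S(σ^A, σ^{A'} ∘ φ⁻¹)`. -/
def simNorm {A A' : Type*} (M : FuzzyAutomaton L Sig A)
    (M' : FuzzyAutomaton L Sig A') (φ : A → A' → L) : L :=
  fuzS M.σ (setRel M'.σ (conv φ))

/-- A fuzzy bisimulation between two fuzzy automata. -/
def IsFuzzyBisimulation {A A' : Type*} (M : FuzzyAutomaton L Sig A)
    (M' : FuzzyAutomaton L Sig A') (φ : A → A' → L) : Prop :=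
  IsFuzzySimulation M M' φ ∧ IsFuzzySimulation M' M (conv φ)

/-- The norm of a fuzzy bisimulation. -/
def bisimNorm {A A' : Type*} (M : FuzzyAutomaton L Sig A)
    (M' : FuzzyAutomaton L Sig A') (φ : A → A' → L) : L :=
  simNorm M M' φ ⊓ simNorm M' M (conv φ)

/-- The fuzzy language recognized from a given state:
`L(A,x)(s₁…sₙ) = (δ_{s₁} ∘ … ∘ δ_{sₙ} ∘ τ)(x)`. -/
def langFrom {A : Type*} (M : FuzzyAutomaton L Sig A) : A → List Sig → L
  | x, [] => M.τ x
  | x, s :: w => ⨆ y, M.δ x s y * langFrom M y w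

/-- The fuzzy language recognized by a fuzzy automaton. -/
def lang {A : Type*} (M : FuzzyAutomaton L Sig A) (w : List Sig) : L :=
  ⨆ x, M.σ x * langFrom M x w

/-- The set `F_s` of formulas of the simulation logic. -/
inductive SimForm (L : Type*) (Sig : Type*) where
  | tau : SimForm L Sig
  | act : Sig → SimForm L Sig → SimForm L Sig
  | imp : L → SimForm L Sig → SimForm L Sig
  | and : SimForm L Sig → SimForm L Sig → SimForm L Sig

/-- Semantics of formulas of `F_s` in a fuzzy automaton. -/
def SimForm.eval {A : Type*} (M : FuzzyAutomaton L Sig A) : SimForm L Sig → A → L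
  | .tau, x => M.τ x
  | .act s w, x => ⨆ y, M.δ x s y * SimForm.eval M w y
  | .imp a w, x => himp a (SimForm.eval M w x)
  | .and w₁ w₂, x => SimForm.eval M w₁ x ⊓ SimForm.eval M w₂ x

namespace CompleteResiduatedLattice

theorem gc_mul_himp (a : L) : GaloisConnection (· * a) (himp a) :=
  fun b c => adjoint b a c

instance : IsQuantale L where
  mul_sSup_distrib x s := by simpa only [mul_comm x] using (gc_mul_himp x).l_sSup
  sSup_mul_distrib s x := (gc_mul_himp x).l_sSup

theorem himp_mul_le (a b : L) : himp a b * a ≤ b :=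
  (adjoint _ _ _).2 le_rfl

end CompleteResiduatedLattice

section FuzzyRelations

variable {X Y Z : Type*}

theorem relSet_mono {φ ψ : X → Y → L} {f g : Y → L} (hφψ : φ ≤ ψ) (hfg : f ≤ g) :
    relSet φ f ≤ relSet ψ g :=
  fun x => iSup_mono fun y => mul_le_mul' (hφψ x y) (hfg y)

theorem relSet_relComp (φ : X → Y → L) (ψ : Y → Z → L) (f : Z → L) :
    relSet (relComp φ ψ) f = relSet φ (relSet ψ f) := by
  funext x
  simp only [relSet, relComp, Quantale.iSup_mul_distrib, Quantale.mul_iSup_distrib, mul_assoc]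
  exact iSup_comm

theorem relSet_himp_le (φ : X → Y → L) (a : L) (f : Y → L) :
    relSet φ (fun y => himp a (f y)) ≤ fun x => himp a (relSet φ f x) := fun x =>
  (adjoint _ _ _).1 <| by
    rw [relSet, Quantale.iSup_mul_distrib]
    exact iSup_mono fun y => (mul_assoc _ _ _).le.trans (mul_le_mul' le_rfl (himp_mul_le _ _))

theorem relSet_le_iff {φ : X → Y → L} {f : Y → L} {g : X → L} :
    relSet φ f ≤ g ↔ ∀ x y, φ x y ≤ himp (f y) (g x) := by
  simp only [Pi.le_def, relSet, iSup_le_iff, adjoint]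

end FuzzyRelations

theorem SimForm.eval_act {A : Type*} (M : FuzzyAutomaton L Sig A) (s : Sig) (w : SimForm L Sig) :
    SimForm.eval M (.act s w) = relSet (fun x y => M.δ x s y) (SimForm.eval M w) :=
  rfl

theorem IsFuzzySimulation.relSet_eval_le {A A' : Type*} {M : FuzzyAutomaton L Sig A}
    {M' : FuzzyAutomaton L Sig A'} {φ : A → A' → L} (hφ : IsFuzzySimulation M M' φ)
    (w : SimForm L Sig) : relSet (conv φ) (SimForm.eval M w) ≤ SimForm.eval M' w := by
  induction w with
  | tau => exact hφ.2
  | act s w ih =>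
    calc relSet (conv φ) (SimForm.eval M (.act s w))
        = relSet (relComp (conv φ) fun x y => M.δ x s y) (SimForm.eval M w) := by
          rw [SimForm.eval_act, relSet_relComp]
      _ ≤ relSet (relComp (fun x' y' => M'.δ x' s y') (conv φ)) (SimForm.eval M w) :=
          relSet_mono (hφ.1 s) le_rfl
      _ = relSet (fun x' y' => M'.δ x' s y') (relSet (conv φ) (SimForm.eval M w)) :=
          relSet_relComp _ _ _
      _ ≤ SimForm.eval M' (.act s w) := relSet_mono le_rfl ih
  | imp a w ih => exact (relSet_himp_le _ _ _).trans fun x => (gc_mul_himp a).monotone_u (ih x)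
  | and w₁ w₂ ih₁ ih₂ =>
    exact le_inf ((relSet_mono le_rfl fun _ => inf_le_left).trans ih₁)
      ((relSet_mono le_rfl fun _ => inf_le_right).trans ih₂)

theorem stmt15_general {A A' : Type*}
    (M : FuzzyAutomaton L Sig A) (M' : FuzzyAutomaton L Sig A')
    (φ : A → A' → L) (hφ : IsFuzzySimulation M M' φ) :
    (∀ w : SimForm L Sig, relSet (conv φ) (SimForm.eval M w) ≤ SimForm.eval M' w) ∧
    (∀ (x : A) (x' : A'),
      φ x x' ≤ ⨅ w : SimForm L Sig, himp (SimForm.eval M w x) (SimForm.eval M' w x')) :=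
  ⟨hφ.relSet_eval_le, fun x x' => le_iInf fun w => relSet_le_iff.1 (hφ.relSet_eval_le w) x' x⟩

theorem stmt15 {A A' : Type*} [Nonempty A] [Nonempty A']
    (M : FuzzyAutomaton L Sig A) (M' : FuzzyAutomaton L Sig A')
    (φ : A → A' → L) (hφ : IsFuzzySimulation M M' φ) :
    (∀ w : SimForm L Sig, relSet (conv φ) (SimForm.eval M w) ≤ SimForm.eval M' w) ∧
    (∀ (x : A) (x' : A'),
      φ x x' ≤ ⨅ w : SimForm L Sig, himp (SimForm.eval M w x) (SimForm.eval M' w x')) :=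
  stmt15_general M M' φ hφ
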